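/- Let f : [0,∞) → ℝ be upper right-continuous and g_t := sup_{0 ≤ u ≤ t} f_u its running supremum. Then g is nondecreasing and right-continuous, and the Stieltjes measure dg is carried by the set {t ≥ 0 : g_t = f_t ∨ g_{t⁻}} ⊆ {t : g_t = f_t} ∪ {0}. -/

import Mathlib

/-!
Let `v` be the last time in `[s, t]` at which `g` still equals `g s`. Before `v` the function `f`
stays below `g s`, so if `f v < g v` then `g v = g s`; upper right-continuity of `f` at `v` then
keeps `f` below `g s` a little beyond `v`, so `g` stays equal to `g s` past `v`, contradicting the
choice of `v`. Right-continuity of `g` comes from the same local estimate.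
-/

open Set Filter Topology

def IsRunningSup (f g : ℝ → ℝ) : Prop :=
  ∀ t, 0 ≤ t → g t = sSup (f '' Icc 0 t)

namespace IsRunningSup

variable {f g : ℝ → ℝ} {s t v a : ℝ}

theorem apply_le (hg : IsRunningSup f g) (hbdd : BddAbove (f '' Icc 0 t)) (hy : v ∈ Icc 0 t) :
    f v ≤ g t := by
  rw [hg t (hy.1.trans hy.2)]
  exact le_csSup hbdd (mem_image_of_mem f hy)

theorem le_of_forall_le (hg : IsRunningSup f g) (ht : 0 ≤ t) (h : ∀ y ∈ Icc 0 t, f y ≤ a) :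
    g t ≤ a := by
  rw [hg t ht]
  exact csSup_le ⟨f 0, mem_image_of_mem f ⟨le_rfl, ht⟩⟩ (forall_mem_image.2 h)

theorem le_max_of_forall_lt (hg : IsRunningSup f g) (hv : 0 ≤ v) (h : ∀ y ∈ Ico 0 v, f y ≤ a) :
    g v ≤ max a (f v) := by
  refine hg.le_of_forall_le hv fun y hy ↦ ?_
  rcases hy.2.lt_or_eq with hyv | rfl
  · exact (h y ⟨hy.1, hyv⟩).trans (le_max_left _ _)
  · exact le_max_right _ _

theorem monotoneOn (hg : IsRunningSup f g) (hbdd : ∀ t, 0 ≤ t → BddAbove (f '' Icc 0 t)) :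
    MonotoneOn g (Ici 0) := fun _ hs t ht hst ↦
  hg.le_of_forall_le hs fun _ hy ↦ hg.apply_le (hbdd t ht) ⟨hy.1, hy.2.trans hst⟩

theorem eventually_le_nhdsGE (hg : IsRunningSup f g) (hf : limsup f (𝓝[>] t) ≤ f t)
    (hbdd : ∀ t, 0 ≤ t → BddAbove (f '' Icc 0 t)) (ht : 0 ≤ t) (hft : f t < a) (hgt : g t ≤ a) :
    ∀ᶠ w in 𝓝[≥] t, g w ≤ a := by
  have hbdd_right : IsBoundedUnder (· ≤ ·) (𝓝[>] t) f :=
    (hbdd (t + 1) (by linarith)).mono (image_mono (Ioc_subset_Icc_self.trans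
      (Icc_subset_Icc_left ht))) |>.isBoundedUnder (Ioc_mem_nhdsGT (lt_add_one t))
  obtain ⟨u, hu, hfu⟩ := mem_nhdsGT_iff_exists_Ioo_subset.1
    (eventually_lt_of_limsup_lt (hf.trans_lt hft) hbdd_right)
  filter_upwards [Ico_mem_nhdsGE hu] with w hw
  refine hg.le_of_forall_le (ht.trans hw.1) fun y hy ↦ ?_
  rcases le_or_gt y t with hyt | hty
  · exact (hg.apply_le (hbdd t ht) ⟨hy.1, hyt⟩).trans hgt
  · exact (hfu ⟨hty, hy.2.trans_lt hw.2⟩).le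

theorem continuousWithinAt_Ici (hg : IsRunningSup f g) (hf : limsup f (𝓝[>] t) ≤ f t)
    (hbdd : ∀ t, 0 ≤ t → BddAbove (f '' Icc 0 t)) (ht : 0 ≤ t) :
    ContinuousWithinAt g (Ici t) t := by
  refine tendsto_order.2 ⟨fun a ha ↦ ?_, fun a ha ↦ ?_⟩
  · filter_upwards [self_mem_nhdsWithin] with w hw
    exact ha.trans_le (hg.monotoneOn hbdd ht (ht.trans hw) hw)
  · obtain ⟨b, hgb, hba⟩ := exists_between ha
    have hfb : f t < b := (hg.apply_le (hbdd t ht) ⟨ht, le_rfl⟩).trans_lt hgb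
    filter_upwards [hg.eventually_le_nhdsGE hf hbdd ht hfb hgb.le] with w hw
    exact hw.trans_lt hba

theorem exists_eq_of_lt (hg : IsRunningSup f g)
    (hf : ∀ t, 0 ≤ t → limsup f (𝓝[>] t) ≤ f t) (hbdd : ∀ t, 0 ≤ t → BddAbove (f '' Icc 0 t))
    (hs : 0 ≤ s) (hst : s ≤ t) (hgst : g s < g t) : ∃ u ∈ Icc s t, g u = f u := by
  set B := {w ∈ Icc s t | g w ≤ g s}
  have hsB : s ∈ B := ⟨⟨le_rfl, hst⟩, le_rfl⟩
  have hB : BddAbove B := ⟨t, fun w hw ↦ hw.1.2⟩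
  set v := sSup B
  have hsv : s ≤ v := le_csSup hB hsB
  have hvt : v ≤ t := csSup_le ⟨s, hsB⟩ fun w hw ↦ hw.1.2
  have hv : 0 ≤ v := hs.trans hsv
  have hf_before : ∀ y ∈ Ico 0 v, f y ≤ g s := fun y hy ↦ by
    obtain ⟨w, hwB, hyw⟩ := exists_lt_of_lt_csSup ⟨s, hsB⟩ hy.2
    exact (hg.apply_le (hbdd w (hs.trans hwB.1.1)) ⟨hy.1, hyw.le⟩).trans hwB.2
  refine ⟨v, ⟨hsv, hvt⟩, by_contra fun hne ↦ ?_⟩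
  have hfv : f v < g v := (hg.apply_le (hbdd v hv) ⟨hv, le_rfl⟩).lt_of_ne' hne
  have hgv : g v ≤ g s :=
    (le_max_iff.1 (hg.le_max_of_forall_lt hv hf_before)).resolve_right hfv.not_ge
  have hvt' : v < t := hvt.lt_of_ne fun h ↦ (h ▸ hgv).not_gt hgst
  obtain ⟨w, hgw, hw⟩ := (((hg.eventually_le_nhdsGE (hf v hv) hbdd hv (hfv.trans_le hgv)
    hgv).filter_mono (nhdsWithin_mono v Ioi_subset_Ici_self)).and (Ioc_mem_nhdsGT hvt')).exists
  exact (le_csSup hB ⟨⟨hsv.trans hw.1.le, hw.2⟩, hgw⟩).not_gt hw.1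

end IsRunningSup

/-- The running supremum `g` of an upper right-continuous function `f` is nondecreasing and
right-continuous, and the Stieltjes measure `dg` is carried by `{t : g t = f t}`: `g` can
increase on an interval `[s,t] ⊆ [0,∞)` only if `g` meets `f` somewhere in `[s,t]`. -/
theorem stmt_15 (f : ℝ → ℝ)
    (hf : ∀ t : ℝ, 0 ≤ t → limsup f (𝓝[>] t) ≤ f t)
    (hbdd : ∀ t : ℝ, 0 ≤ t → BddAbove (f '' Icc 0 t))
    (g : ℝ → ℝ) (hg : ∀ t : ℝ, 0 ≤ t → g t = sSup (f '' Icc 0 t)) :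
    MonotoneOn g (Ici 0) ∧
    (∀ t : ℝ, 0 ≤ t → ContinuousWithinAt g (Ici t) t) ∧
    (∀ s t : ℝ, 0 ≤ s → s ≤ t → g s < g t → ∃ u ∈ Icc s t, g u = f u) := by
  have hg : IsRunningSup f g := hg
  exact ⟨hg.monotoneOn hbdd, fun t ht ↦ hg.continuousWithinAt_Ici (hf t ht) hbdd ht,
    fun s t hs hst hgst ↦ hg.exists_eq_of_lt hf hbdd hs hst hgst⟩
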